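/- arXiv:2602.22467 — 4 statements merged into one kernel-verified Lean document; each statement's English description precedes it below -/
import Mathlib

section
/- Let b : ℝ → ℝ be twice continuously differentiable, let u₀ : ℝ → ℝ, and let γ : ℝ × [0,∞) → ℝ be twice continuously differentiable with γ(x,0) = x and ∂ₜγ(x,0) = u₀(x) for all x ∈ ℝ. If γ satisfies the Euler–Lagrange equation ∂ₓγ · b''(∂ₜγ) · ∂ₜₜγ + 2 b'(∂ₜγ) · ∂ₜ∂ₓγ = 0 at every point of ℝ × [0,∞), then b'(∂ₜγ(x,t)) · (∂ₓγ(x,t))² = b'(u₀(x)) for every x ∈ ℝ and every t ≥ 0. -/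
/-!
Along each particle path `t ↦ γ(x, t)` the quantity `b'(γ_t) γ_x²` has time derivative
`γ_x · (γ_x b''(γ_t) γ_tt + 2 b'(γ_t) γ_tx)`, which the Euler–Lagrange equation makes vanish.
It is therefore conserved for `t ≥ 0`, and at `t = 0` it equals `b'(u₀) · 1²`.
-/

section

variable {𝕜 E F : Type*} [NontriviallyNormedField 𝕜] [NormedAddCommGroup E] [NormedSpace 𝕜 E]
  [NormedAddCommGroup F] [NormedSpace 𝕜 F]

protected theorem ContDiff.deriv {m n : WithTop ℕ∞} {f : E → 𝕜 → F} {g : E → 𝕜}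
    (hf : ContDiff 𝕜 m (Function.uncurry f)) (hg : ContDiff 𝕜 n g) (hnm : n + 1 ≤ m) :
    ContDiff 𝕜 n fun x => deriv (f x) (g x) :=
  (hf.fderiv hg hnm).clm_apply contDiff_const

end

theorem hasDerivAt_mul_sq_comp {β G H : ℝ → ℝ} {s : ℝ} (hβ : DifferentiableAt ℝ β (G s))
    (hG : DifferentiableAt ℝ G s) (hH : DifferentiableAt ℝ H s) :
    HasDerivAt (fun s => β (G s) * H s ^ 2)
      (H s * (H s * deriv β (G s) * deriv G s + 2 * β (G s) * deriv H s)) s :=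
  ((hβ.hasDerivAt.comp s hG.hasDerivAt).mul (hH.hasDerivAt.fun_pow 2)).congr_deriv (by
    rw [Function.comp_apply]; push_cast; ring)

theorem mul_sq_comp_eq_of_euler_lagrange {β G H : ℝ → ℝ} (hβ : Differentiable ℝ β)
    (hG : Differentiable ℝ G) (hH : Differentiable ℝ H) {a t : ℝ}
    (hEL : ∀ s ∈ Set.Ico a t, H s * deriv β (G s) * deriv G s + 2 * β (G s) * deriv H s = 0)
    (hat : a ≤ t) : β (G t) * H t ^ 2 = β (G a) * H a ^ 2 := by
  refine constant_of_has_deriv_right_zero (f := fun s => β (G s) * H s ^ 2)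
    ((hβ.comp hG).mul (hH.pow 2)).continuous.continuousOn (fun s hs => ?_) t ⟨hat, le_rfl⟩
  simpa only [hEL s hs, mul_zero] using
    (hasDerivAt_mul_sq_comp (hβ _) (hG s) (hH s)).hasDerivWithinAt

/-- If the C² path `γ` (with `γ(x,0) = x`, `∂ₜγ(x,0) = u₀(x)`) satisfies the
Euler–Lagrange equation `γ_x b''(γ_t) γ_tt + 2 b'(γ_t) γ_tx = 0` on `ℝ × [0,∞)`,
then `b'(γ_t) γ_x² = b'(u₀)` there. -/
theorem stmt0
    (b u₀ : ℝ → ℝ) (γ : ℝ → ℝ → ℝ)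
    (hb : ContDiff ℝ 2 b)
    (hγ : ContDiff ℝ 2 (Function.uncurry γ))
    (hinit : ∀ x : ℝ, γ x 0 = x)
    (hvel : ∀ x : ℝ, deriv (γ x) 0 = u₀ x)
    (hEL : ∀ x t : ℝ, 0 ≤ t →
      deriv (fun y => γ y t) x * deriv (deriv b) (deriv (γ x) t) *
          deriv (deriv (γ x)) t
        + 2 * deriv b (deriv (γ x) t) *
          deriv (fun s => deriv (fun y => γ y s) x) t = 0) :
    ∀ x t : ℝ, 0 ≤ t →
      deriv b (deriv (γ x) t) * (deriv (fun y => γ y t) x) ^ 2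
        = deriv b (u₀ x) := by
  intro x t ht
  have hγt : Differentiable ℝ (deriv (γ x)) :=
    (ContDiff.deriv (f := fun _ => γ x) (hγ.comp (contDiff_const.prodMk contDiff_snd))
      contDiff_id le_rfl).differentiable one_ne_zero
  have hγx : Differentiable ℝ fun s => deriv (fun y => γ y s) x :=
    (ContDiff.deriv (f := fun s y => γ y s) (hγ.comp (contDiff_snd.prodMk contDiff_fst))
      contDiff_const le_rfl).differentiable one_ne_zero
  have hγx_zero : deriv (fun y => γ y 0) x = 1 := by simp only [hinit, deriv_id'']
  rw [mul_sq_comp_eq_of_euler_lagrange hb.differentiable_deriv_two hγt hγx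
    (fun s hs => hEL x s hs.1) ht, hvel, hγx_zero, one_pow, mul_one]
end

section
/- Let p : (0,∞) → ℝ be C¹ and define b(r,s,q) = q r²/(2s) + (1/s)·∫₁ˢ p(q/σ) dσ for r ∈ ℝ, s > 0, q > 0. Then b is C² in (r,s,q), and for all r ∈ ℝ, s > 0, q > 0 and all real numbers T, X, Y, D: b_rr(r,s,q)·T + 2(b_rs(r,s,q) + b_r(r,s,q)/s)·X + (b_ss(r,s,q) + 2 b_s(r,s,q)/s)·Y + D·(b_sq(r,s,q) + b_q(r,s,q)/s) = (1/s)·[ q·T − p'(q/s)·(q/s²)·Y + D·p'(q/s)/s ]. -/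
/-!
Write `b = L / s` with `L(r,s,q) = q r²/2 + ∫₁ˢ p(q/σ) dσ`; then the action is
`∫∫ L(γ_t, γ_x, ρ₀)`. By the quotient rule the left-hand side is
`(1/s)(L_rr T + 2 L_rs X + L_ss Y + D L_sq)`, and `L_rr = q`, `L_rs = 0`, while the fundamental
theorem of calculus gives `L_s = p(q/s)`, hence `L_ss = -p'(q/s) q/s²` and `L_sq = p'(q/s)/s`.
Regularity comes from the substitution `u = q/σ`:
`∫₁ˢ p(q/σ) dσ = q (P(q) - P(q/s))` with `P(x) = ∫₁ˣ p(u)/u² du`, which is `C²` on `(0,∞)`.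
-/

open Set Filter Topology MeasureTheory intervalIntegral

theorem ContinuousOn.hasDerivAt_integral_of_isOpen {E : Type*} [NormedAddCommGroup E]
    [NormedSpace ℝ E] [CompleteSpace E] {f : ℝ → E} {s : Set ℝ} {a x : ℝ}
    (hf : ContinuousOn f s) (hs : IsOpen s) (hs' : s.OrdConnected) (ha : a ∈ s) (hx : x ∈ s) :
    HasDerivAt (fun y => ∫ u in a..y, f u) (f x) x :=
  integral_hasDerivAt_right (hf.mono (hs'.uIcc_subset ha hx)).intervalIntegrable
    (hf.stronglyMeasurableAtFilter hs x hx) (hf.continuousAt (hs.mem_nhds hx))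

section QuotientByVariable

theorem hasDerivAt_div_id {g : ℝ → ℝ} {g' s : ℝ} (hg : HasDerivAt g g' s) (hs : s ≠ 0) :
    HasDerivAt (fun x => g x / x) ((g' - g s / s) / s) s := by
  refine (hg.div (hasDerivAt_id' s) hs).congr_deriv ?_
  field_simp

theorem deriv_div_id {g : ℝ → ℝ} {s : ℝ} (hg : DifferentiableAt ℝ g s) (hs : s ≠ 0) :
    deriv (fun x => g x / x) s = (deriv g s - g s / s) / s :=
  (hasDerivAt_div_id hg.hasDerivAt hs).deriv

theorem deriv_deriv_div_id_add {g : ℝ → ℝ} {s : ℝ}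
    (hg : ∀ᶠ x in 𝓝 s, DifferentiableAt ℝ g x) (hg' : DifferentiableAt ℝ (deriv g) s) (hs : s ≠ 0) :
    deriv (fun x => deriv (fun y => g y / y) x) s + 2 * deriv (fun x => g x / x) s / s
      = deriv (deriv g) s / s := by
  have e : (fun x => deriv (fun y => g y / y) x) =ᶠ[𝓝 s] fun x => (deriv g x - g x / x) / x :=
    (hg.and (eventually_ne_nhds hs)).mono fun x hx => deriv_div_id hx.1 hx.2
  have hgs := hasDerivAt_div_id hg.self_of_nhds.hasDerivAt hs
  have hg'' : HasDerivAt (fun x => (deriv g x - g x / x) / x) _ s :=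
    hasDerivAt_div_id (hg'.hasDerivAt.sub hgs) hs
  rw [e.deriv_eq, hg''.deriv, hgs.deriv]
  field_simp
  ring

theorem deriv_deriv_div_id_add_outer {F : ℝ → ℝ → ℝ} {r s : ℝ}
    (hF : DifferentiableAt ℝ (fun y => deriv (fun x => F x y) r) s) (hs : s ≠ 0) :
    deriv (fun y => deriv (fun x => F x y / y) r) s + deriv (fun x => F x s / s) r / s
      = deriv (fun y => deriv (fun x => F x y) r) s / s := by
  simp only [deriv_div_const]
  rw [deriv_div_id hF hs]
  field_simp
  ring

theorem deriv_deriv_div_id_add_inner {G : ℝ → ℝ → ℝ} {s q : ℝ}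
    (hG : ∀ᶠ y in 𝓝 q, DifferentiableAt ℝ (fun x => G x y) s)
    (hGs : DifferentiableAt ℝ (fun y => deriv (fun x => G x y) s) q)
    (hGq : DifferentiableAt ℝ (fun y => G s y) q) (hs : s ≠ 0) :
    deriv (fun y => deriv (fun x => G x y / x) s) q + deriv (fun y => G s y / s) q / s
      = deriv (fun y => deriv (fun x => G x y) s) q / s := by
  have e : (fun y => deriv (fun x => G x y / x) s) =ᶠ[𝓝 q]
      fun y => (deriv (fun x => G x y) s - G s y / s) / s :=
    hG.mono fun y hy => deriv_div_id hy hs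
  have hGs' : HasDerivAt (fun y => (deriv (fun x => G x y) s - G s y / s) / s) _ q :=
    (hGs.hasDerivAt.sub (hGq.hasDerivAt.div_const s)).div_const s
  rw [e.deriv_eq, hGs'.deriv, deriv_div_const]
  field_simp
  ring

end QuotientByVariable

noncomputable def primitiveDivSq (p : ℝ → ℝ) (x : ℝ) : ℝ :=
  ∫ u in (1:ℝ)..x, p u / u ^ 2

noncomputable def gasLagrangian (p : ℝ → ℝ) (r s q : ℝ) : ℝ :=
  q * r ^ 2 / 2 + ∫ σ in (1:ℝ)..s, p (q / σ)

section Primitive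

variable {p : ℝ → ℝ}

theorem ContinuousOn.div_sq (hp : ContinuousOn p (Ioi 0)) :
    ContinuousOn (fun u => p u / u ^ 2) (Ioi 0) :=
  hp.div (by fun_prop) fun _ hu => pow_ne_zero 2 (ne_of_gt hu)

theorem ContinuousOn.comp_const_div {q : ℝ} (hp : ContinuousOn p (Ioi 0)) (hq : 0 < q) :
    ContinuousOn (fun σ => p (q / σ)) (Ioi 0) :=
  hp.comp (continuousOn_const.div continuousOn_id fun _ hσ => ne_of_gt hσ)
    fun _ hσ => div_pos hq hσ

theorem hasDerivAt_primitiveDivSq (hp : ContinuousOn p (Ioi 0)) {x : ℝ} (hx : 0 < x) :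
    HasDerivAt (primitiveDivSq p) (p x / x ^ 2) x :=
  hp.div_sq.hasDerivAt_integral_of_isOpen isOpen_Ioi ordConnected_Ioi (mem_Ioi.2 one_pos) hx

theorem contDiffOn_primitiveDivSq (hp : ContDiffOn ℝ 1 p (Ioi 0)) :
    ContDiffOn ℝ 2 (primitiveDivSq p) (Ioi 0) := by
  rw [show (2 : WithTop ℕ∞) = 1 + 1 from rfl, contDiffOn_succ_iff_deriv_of_isOpen isOpen_Ioi]
  refine ⟨fun x hx => (hasDerivAt_primitiveDivSq hp.continuousOn hx).differentiableAt
    |>.differentiableWithinAt, by simp, ?_⟩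
  refine (hp.div (contDiffOn_id.pow 2) fun x hx => pow_ne_zero 2 (ne_of_gt hx)).congr
    fun x hx => (hasDerivAt_primitiveDivSq hp.continuousOn hx).deriv

theorem integral_comp_const_div_eq_primitiveDivSq (hp : ContinuousOn p (Ioi 0)) {s q : ℝ}
    (hs : 0 < s) (hq : 0 < q) :
    ∫ σ in (1:ℝ)..s, p (q / σ) = q * (primitiveDivSq p q - primitiveDivSq p (q / s)) := by
  have h1s : uIcc 1 s ⊆ Ioi 0 := ordConnected_Ioi.uIcc_subset one_pos hs
  have hsubst := integral_comp_mul_deriv' (a := 1) (b := s) (f := fun σ => q / σ)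
    (f' := fun σ => -q / σ ^ 2) (g := fun u => p u / u ^ 2)
    (fun σ hσ => by
      simpa [div_eq_mul_inv] using (hasDerivAt_inv (ne_of_gt (h1s hσ))).const_mul q)
    (continuousOn_const.div (by fun_prop) fun σ hσ => pow_ne_zero 2 (ne_of_gt (h1s hσ)))
    (hp.div_sq.mono (by rintro _ ⟨σ, hσ, rfl⟩; exact div_pos hq (h1s hσ)))
  have hint : ∫ σ in (1:ℝ)..s, ((fun u => p u / u ^ 2) ∘ fun σ => q / σ) σ * (-q / σ ^ 2)
      = -(∫ σ in (1:ℝ)..s, p (q / σ)) / q := by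
    rw [← intervalIntegral.integral_neg, ← intervalIntegral.integral_div]
    refine integral_congr fun σ hσ => ?_
    have : σ ≠ 0 := ne_of_gt (h1s hσ)
    simp only [Function.comp_apply]
    field_simp
  rw [hint, div_one, ← integral_interval_sub_left (hp.div_sq.mono
    (ordConnected_Ioi.uIcc_subset one_pos (div_pos hq hs))).intervalIntegrable
    (hp.div_sq.mono (ordConnected_Ioi.uIcc_subset one_pos hq)).intervalIntegrable]
    at hsubst
  unfold primitiveDivSq
  field_simp at hsubst
  linarith

end Primitive

section GasLagrangian

variable {p : ℝ → ℝ}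

theorem gasLagrangian_eq (hp : ContinuousOn p (Ioi 0)) (r : ℝ) {s q : ℝ} (hs : 0 < s)
    (hq : 0 < q) :
    gasLagrangian p r s q
      = q * r ^ 2 / 2 + q * (primitiveDivSq p q - primitiveDivSq p (q / s)) := by
  rw [gasLagrangian, integral_comp_const_div_eq_primitiveDivSq hp hs hq]

theorem contDiffOn_gasLagrangian (hp : ContDiffOn ℝ 1 p (Ioi 0)) :
    ContDiffOn ℝ 2 (fun z : ℝ × ℝ × ℝ => gasLagrangian p z.1 z.2.1 z.2.2)
      (univ ×ˢ Ioi 0 ×ˢ Ioi 0) := by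
  have hP := contDiffOn_primitiveDivSq hp
  have hs : ContDiffOn ℝ 2 (fun z : ℝ × ℝ × ℝ => z.2.1) (univ ×ˢ Ioi 0 ×ˢ Ioi 0) := by
    fun_prop
  have hq : ContDiffOn ℝ 2 (fun z : ℝ × ℝ × ℝ => z.2.2) (univ ×ˢ Ioi 0 ×ˢ Ioi 0) := by
    fun_prop
  refine ContDiffOn.congr ?_ fun z hz => gasLagrangian_eq hp.continuousOn z.1 hz.2.1 hz.2.2
  have hPq := hP.comp hq fun z hz => hz.2.2
  have hPqs := hP.comp (hq.div hs fun z hz => hz.2.1.ne')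
    fun z hz => mem_Ioi.2 (div_pos hz.2.2 hz.2.1)
  exact (by fun_prop : ContDiff ℝ 2 fun z : ℝ × ℝ × ℝ => z.2.2 * z.1 ^ 2 / 2).contDiffOn.add
    (hq.mul (hPq.sub hPqs))

theorem differentiableAt_gasLagrangian_thd (hp : ContDiffOn ℝ 1 p (Ioi 0)) (r : ℝ) {s q : ℝ}
    (hs : 0 < s) (hq : 0 < q) :
    DifferentiableAt ℝ (fun y => gasLagrangian p r s y) q := by
  have hU : (r, s, q) ∈ univ ×ˢ Ioi (0:ℝ) ×ˢ Ioi (0:ℝ) := ⟨trivial, hs, hq⟩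
  exact (((contDiffOn_gasLagrangian hp).differentiableOn two_ne_zero).differentiableAt
    ((isOpen_univ.prod (isOpen_Ioi.prod isOpen_Ioi)).mem_nhds hU)).comp q
    (by fun_prop : DifferentiableAt ℝ (fun y : ℝ => (r, s, y)) q)

theorem hasDerivAt_gasLagrangian_fst (r s q : ℝ) :
    HasDerivAt (fun x => gasLagrangian p x s q) (q * r) r := by
  unfold gasLagrangian
  refine (((hasDerivAt_pow 2 r).const_mul q).div_const 2).add_const _ |>.congr_deriv ?_
  ring

theorem hasDerivAt_gasLagrangian_snd (hp : ContinuousOn p (Ioi 0)) (r : ℝ) {s q : ℝ}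
    (hs : 0 < s) (hq : 0 < q) :
    HasDerivAt (fun x => gasLagrangian p r x q) (p (q / s)) s :=
  ((hp.comp_const_div hq).hasDerivAt_integral_of_isOpen isOpen_Ioi ordConnected_Ioi
    (mem_Ioi.2 one_pos) hs).const_add _

theorem hasDerivAt_deriv_gasLagrangian_snd (hp : DifferentiableOn ℝ p (Ioi 0)) (r : ℝ)
    {s q : ℝ} (hs : 0 < s) (hq : 0 < q) :
    HasDerivAt (deriv fun x => gasLagrangian p r x q) (-(deriv p (q / s) * (q / s ^ 2))) s := by
  have e : (deriv fun x => gasLagrangian p r x q) =ᶠ[𝓝 s] fun x => p (q / x) :=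
    eventually_of_mem (Ioi_mem_nhds hs) fun x hx =>
      (hasDerivAt_gasLagrangian_snd hp.continuousOn r hx hq).deriv
  have hpd := (hp.differentiableAt (Ioi_mem_nhds (div_pos hq hs))).hasDerivAt
  refine (hpd.comp s ((hasDerivAt_inv hs.ne').const_mul q)).congr_of_eventuallyEq e
    |>.congr_deriv ?_
  field_simp

theorem hasDerivAt_deriv_gasLagrangian_snd_thd (hp : DifferentiableOn ℝ p (Ioi 0)) (r : ℝ)
    {s q : ℝ} (hs : 0 < s) (hq : 0 < q) :
    HasDerivAt (fun y => deriv (fun x => gasLagrangian p r x y) s) (deriv p (q / s) / s) q := by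
  have e : (fun y => deriv (fun x => gasLagrangian p r x y) s) =ᶠ[𝓝 q] fun y => p (y / s) :=
    eventually_of_mem (Ioi_mem_nhds hq) fun y hy =>
      (hasDerivAt_gasLagrangian_snd hp.continuousOn r hs hy).deriv
  have hpd := (hp.differentiableAt (Ioi_mem_nhds (div_pos hq hs))).hasDerivAt
  refine (hpd.comp q ((hasDerivAt_id' q).div_const s)).congr_of_eventuallyEq e
    |>.congr_deriv ?_
  ring

end GasLagrangian

/-- For `b(r,s,q) = q r²/(2s) + (1/s)∫₁ˢ p(q/σ) dσ` (with `p` C¹ on `(0,∞)`),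
`b` is C² on `ℝ × (0,∞) × (0,∞)`, and the Euler–Lagrange expression
`b_rr T + 2(b_rs + b_r/s) X + (b_ss + 2b_s/s) Y + D (b_sq + b_q/s)` equals
`(1/s)(q T − p'(q/s)(q/s²) Y + D p'(q/s)/s)`: the extremals of the corresponding action are
the solutions of the isentropic gas dynamics particle-path equation. -/
theorem stmt11
    (p : ℝ → ℝ) (b : ℝ → ℝ → ℝ → ℝ)
    (hp : ContDiffOn ℝ 1 p (Set.Ioi 0))
    (hbdef : ∀ r s q : ℝ, b r s q
      = q * r ^ 2 / (2 * s) + (1 / s) * ∫ σ in (1:ℝ)..s, p (q / σ)) :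
    ContDiffOn ℝ 2 (fun P : ℝ × ℝ × ℝ => b P.1 P.2.1 P.2.2)
      (Set.univ ×ˢ Set.Ioi 0 ×ˢ Set.Ioi 0)
    ∧ ∀ r s q T X Y D : ℝ, 0 < s → 0 < q →
      deriv (fun r' => deriv (fun r'' => b r'' s q) r') r * T
      + 2 * (deriv (fun s' => deriv (fun r' => b r' s' q) r) s
          + deriv (fun r' => b r' s q) r / s) * X
      + (deriv (fun s' => deriv (fun s'' => b r s'' q) s') s
          + 2 * deriv (fun s' => b r s' q) s / s) * Y
      + D * (deriv (fun q' => deriv (fun s' => b r s' q') s) q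
          + deriv (fun q' => b r s q') q / s)
      = (1 / s) * (q * T - deriv p (q / s) * (q / s ^ 2) * Y
          + D * deriv p (q / s) / s) := by
  obtain rfl : b = fun r s q => gasLagrangian p r s q / s := by
    funext r s q
    rw [hbdef, gasLagrangian]
    ring
  refine ⟨(contDiffOn_gasLagrangian hp).div (by fun_prop) fun z hz => hz.2.1.ne',
    fun r s q T X Y D hs hq => ?_⟩
  have hpd := hp.differentiableOn one_ne_zero
  have hLq := differentiableAt_gasLagrangian_thd hp r hs hq
  have hLss := hasDerivAt_deriv_gasLagrangian_snd hpd r hs hq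
  have hLsq := hasDerivAt_deriv_gasLagrangian_snd_thd hpd r hs hq
  have hLrr : ∀ x y, deriv (fun x' => gasLagrangian p x' y q) x = q * x :=
    fun x y => (hasDerivAt_gasLagrangian_fst x y q).deriv
  have hLs : ∀ᶠ x in 𝓝 s, DifferentiableAt ℝ (fun x' => gasLagrangian p r x' q) x :=
    eventually_of_mem (Ioi_mem_nhds hs) fun x hx =>
      (hasDerivAt_gasLagrangian_snd hpd.continuousOn r hx hq).differentiableAt
  have hLs' : ∀ᶠ y in 𝓝 q, DifferentiableAt ℝ (fun x => gasLagrangian p r x y) s :=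
    eventually_of_mem (Ioi_mem_nhds hq) fun y hy =>
      (hasDerivAt_gasLagrangian_snd hpd.continuousOn r hs hy).differentiableAt
  rw [deriv_deriv_div_id_add_outer (by simp only [hLrr]; fun_prop) hs.ne',
    deriv_deriv_div_id_add hLs hLss.differentiableAt hs.ne',
    deriv_deriv_div_id_add_inner hLs' hLsq.differentiableAt hLq hs.ne',
    hLss.deriv, hLsq.deriv]
  have hrr : deriv (fun x => q * x) r = q :=
    ((hasDerivAt_id' r).const_mul q).deriv.trans (mul_one q)
  simp only [deriv_div_const, hLrr, hrr, deriv_const']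
  ring
end

section
/- Let p : (0,∞) → ℝ be C¹ and let P be an antiderivative of p on (0,∞). Define b(r,s,q) = (1/2)(rq/s)² − P(q/s) for r ∈ ℝ, s > 0, q > 0. Then b is C² and for all r ∈ ℝ, s > 0, q > 0 and all real numbers T, X, Y, D: b_rr·T + 2(b_rs + b_r/s)·X + (b_ss + 2b_s/s)·Y + D·(b_sq + b_q/s) = (q²/s³)·[ s·T − 2r·X − (1/s)(p'(q/s) − r²)·Y + (D/q)(p'(q/s) − r²) ], where all partial derivatives of b are evaluated at (r,s,q). -/
/-!
With `ρ = q / s` we have `b(r, s, q) = L_r(ρ)` for `L_r(ρ) = ½ (r ρ)² − P(ρ)`, whose first two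
`ρ`-derivatives are `r² ρ − p(ρ)` and `r² − p'(ρ)`. The `s`- and `q`-derivatives of `b` up to
order two therefore follow from the chain rule through `(s, q) ↦ q / s`, the `r`-derivatives are
those of a quadratic polynomial, and the claimed identity becomes an identity of rational
functions in `r, s, q, p(ρ), p'(ρ)`.
-/

open Set Filter Topology

noncomputable def densityLagrangian (P : ℝ → ℝ) (r ρ : ℝ) : ℝ := 1 / 2 * (r * ρ) ^ 2 - P ρ

section QuotientChainRule

variable {φ φ' : ℝ → ℝ} {c q s : ℝ}

theorem HasDerivAt.comp_const_div (hφ : HasDerivAt φ c (q / s)) (hs : s ≠ 0) :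
    HasDerivAt (fun s' => φ (q / s')) (-(c * q / s ^ 2)) s := by
  have hu : HasDerivAt (fun s' : ℝ => q / s') (-(q / s ^ 2)) s := by
    simpa [div_eq_mul_inv] using (hasDerivAt_inv hs).const_mul q
  exact (hφ.comp s hu).congr_deriv (by ring)

theorem HasDerivAt.comp_div_const (hφ : HasDerivAt φ c (q / s)) :
    HasDerivAt (fun q' => φ (q' / s)) (c / s) q :=
  (hφ.comp q ((hasDerivAt_id' q).div_const s)).congr_deriv (by ring)

theorem deriv_deriv_comp_const_div (hφ : ∀ᶠ u in 𝓝 (q / s), HasDerivAt φ (φ' u) u)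
    (hφ' : HasDerivAt φ' c (q / s)) (hs : s ≠ 0) :
    deriv (fun s' => deriv (fun s'' => φ (q / s'')) s') s
      = c * q ^ 2 / s ^ 4 + 2 * φ' (q / s) * q / s ^ 3 := by
  have hφs : ∀ᶠ s' in 𝓝 s, HasDerivAt φ (φ' (q / s')) (q / s') :=
    (continuousAt_const.div continuousAt_id hs).eventually hφ
  have hderiv : (fun s' => deriv (fun s'' => φ (q / s'')) s') =ᶠ[𝓝 s]
      fun s' => -(φ' (q / s') * q / s' ^ 2) := by
    filter_upwards [hφs, eventually_ne_nhds hs] with s' hs'φ hs'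
    exact (hs'φ.comp_const_div hs').deriv
  rw [hderiv.deriv_eq]
  have h := ((hφ'.comp_const_div hs).mul_const q).fun_div (hasDerivAt_pow 2 s) (pow_ne_zero 2 hs)
  rw [h.fun_neg.deriv]
  field_simp
  ring

theorem deriv_deriv_comp_div_mixed (hφ : ∀ᶠ u in 𝓝 (q / s), HasDerivAt φ (φ' u) u)
    (hφ' : HasDerivAt φ' c (q / s)) (hs : s ≠ 0) :
    deriv (fun q' => deriv (fun s' => φ (q' / s')) s) q
      = -(c * q / s ^ 3) - φ' (q / s) / s ^ 2 := by
  have hφq : ∀ᶠ q' in 𝓝 q, HasDerivAt φ (φ' (q' / s)) (q' / s) :=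
    (continuousAt_id.div_const s).eventually hφ
  have hderiv : (fun q' => deriv (fun s' => φ (q' / s')) s) =ᶠ[𝓝 q]
      fun q' => -(φ' (q' / s) * q' / s ^ 2) := by
    filter_upwards [hφq] with q' hq'φ
    exact (hq'φ.comp_const_div hs).deriv
  rw [hderiv.deriv_eq]
  have h := ((hφ'.comp_div_const).fun_mul (hasDerivAt_id' q)).div_const (s ^ 2)
  rw [h.fun_neg.deriv]
  field_simp
  ring

end QuotientChainRule

theorem contDiffOn_succ_of_hasDerivAt {n : ℕ} {f f' : ℝ → ℝ} {t : Set ℝ} (ht : IsOpen t)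
    (hf : ∀ x ∈ t, HasDerivAt f (f' x) x) (hf' : ContDiffOn ℝ n f' t) :
    ContDiffOn ℝ (n + 1) f t := by
  rw [contDiffOn_succ_iff_deriv_of_isOpen ht]
  exact ⟨fun x hx => (hf x hx).differentiableAt.differentiableWithinAt, by simp,
    hf'.congr fun x hx => (hf x hx).deriv⟩

section DensityLagrangian

variable {P : ℝ → ℝ} {c r ρ q s : ℝ}

theorem hasDerivAt_densityLagrangian_fst (P : ℝ → ℝ) (r ρ : ℝ) :
    HasDerivAt (fun r' => densityLagrangian P r' ρ) (r * ρ ^ 2) r :=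
  ((((hasDerivAt_id' r).mul_const ρ).pow 2).const_mul (1 / 2 : ℝ) |>.sub_const (P ρ)).congr_deriv
    (by ring)

theorem deriv_densityLagrangian_fst (P : ℝ → ℝ) (r ρ : ℝ) :
    deriv (fun r' => densityLagrangian P r' ρ) r = r * ρ ^ 2 :=
  (hasDerivAt_densityLagrangian_fst P r ρ).deriv

theorem hasDerivAt_densityLagrangian_snd (hP : HasDerivAt P c ρ) :
    HasDerivAt (densityLagrangian P r) (r ^ 2 * ρ - c) ρ :=
  (((((hasDerivAt_id' ρ).const_mul r).pow 2).const_mul (1 / 2 : ℝ)).sub hP).congr_deriv (by ring)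

theorem deriv_deriv_densityLagrangian_fst (P : ℝ → ℝ) (r ρ : ℝ) :
    deriv (fun r' => deriv (fun r'' => densityLagrangian P r'' ρ) r') r = ρ ^ 2 := by
  simp only [deriv_densityLagrangian_fst]
  exact ((hasDerivAt_id' r).mul_const _).deriv.trans (one_mul _)

theorem deriv_deriv_densityLagrangian_fst_comp_const_div (P : ℝ → ℝ) (hs : s ≠ 0) :
    deriv (fun s' => deriv (fun r' => densityLagrangian P r' (q / s')) r) s
      = -(2 * r * q ^ 2 / s ^ 3) := by
  simp only [deriv_densityLagrangian_fst]
  rw [(((hasDerivAt_pow 2 (q / s)).const_mul r).comp_const_div hs).deriv]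
  norm_num
  field_simp

theorem contDiffOn_densityLagrangian_comp_div {n : WithTop ℕ∞} (hP : ContDiffOn ℝ n P (Ioi 0)) :
    ContDiffOn ℝ n (fun Z : ℝ × ℝ × ℝ => densityLagrangian P Z.1 (Z.2.2 / Z.2.1))
      (univ ×ˢ Ioi 0 ×ˢ Ioi 0) := by
  have hquot : ContDiffOn ℝ n (fun Z : ℝ × ℝ × ℝ => Z.2.2 / Z.2.1) (univ ×ˢ Ioi 0 ×ˢ Ioi 0) :=
    (contDiff_snd.comp contDiff_snd).contDiffOn.div (contDiff_fst.comp contDiff_snd).contDiffOn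
      fun Z hZ => hZ.2.1.out.ne'
  have hmaps : MapsTo (fun Z : ℝ × ℝ × ℝ => Z.2.2 / Z.2.1) (univ ×ˢ Ioi 0 ×ˢ Ioi 0) (Ioi 0) :=
    fun Z hZ => mem_Ioi.mpr (div_pos hZ.2.2 hZ.2.1)
  exact ((contDiffOn_const.mul ((contDiff_fst.contDiffOn.mul hquot).pow 2)).sub
    (hP.comp hquot hmaps))

end DensityLagrangian

/-- For `b(r,s,q) = (1/2)(rq/s)² − P(q/s)` with `P` an antiderivative of `p`
on `(0,∞)`, `b` is C² on `ℝ × (0,∞) × (0,∞)` and the Euler–Lagrange expression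
`b_rr T + 2(b_rs + b_r/s) X + (b_ss + 2b_s/s) Y + D (b_sq + b_q/s)` equals
`(q²/s³)(s T − 2r X − (1/s)(p'(q/s) − r²) Y + (D/q)(p'(q/s) − r²))`: the extremals of the
corresponding action are the solutions of the particle-path form of the nonlinear wave
equation. -/
theorem stmt18
    (p P : ℝ → ℝ) (b : ℝ → ℝ → ℝ → ℝ)
    (hp : ContDiffOn ℝ 1 p (Set.Ioi 0))
    (hP : ∀ y : ℝ, 0 < y → HasDerivAt P (p y) y)
    (hbdef : ∀ r s q : ℝ, b r s q = (1 / 2) * (r * q / s) ^ 2 - P (q / s)) :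
    ContDiffOn ℝ 2 (fun Z : ℝ × ℝ × ℝ => b Z.1 Z.2.1 Z.2.2)
      (Set.univ ×ˢ Set.Ioi 0 ×ˢ Set.Ioi 0)
    ∧ ∀ r s q T X Y D : ℝ, 0 < s → 0 < q →
      deriv (fun r' => deriv (fun r'' => b r'' s q) r') r * T
      + 2 * (deriv (fun s' => deriv (fun r' => b r' s' q) r) s
          + deriv (fun r' => b r' s q) r / s) * X
      + (deriv (fun s' => deriv (fun s'' => b r s'' q) s') s
          + 2 * deriv (fun s' => b r s' q) s / s) * Y
      + D * (deriv (fun q' => deriv (fun s' => b r s' q') s) q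
          + deriv (fun q' => b r s q') q / s)
      = (q ^ 2 / s ^ 3) * (s * T - 2 * r * X
          - (1 / s) * (deriv p (q / s) - r ^ 2) * Y
          + (D / q) * (deriv p (q / s) - r ^ 2)) := by
  obtain rfl : b = fun r s q => densityLagrangian P r (q / s) := by
    funext r s q
    rw [hbdef, densityLagrangian, mul_div_assoc]
  refine ⟨contDiffOn_densityLagrangian_comp_div
    (contDiffOn_succ_of_hasDerivAt isOpen_Ioi hP hp), fun r s q T X Y D hs hq => ?_⟩
  have hρ : 0 < q / s := div_pos hq hs
  have hL : ∀ᶠ ρ in 𝓝 (q / s), HasDerivAt (densityLagrangian P r) (r ^ 2 * ρ - p ρ) ρ :=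
    (eventually_gt_nhds hρ).mono fun ρ hρ => hasDerivAt_densityLagrangian_snd (hP ρ hρ)
  have hp' : HasDerivAt p (deriv p (q / s)) (q / s) :=
    ((hp.differentiableOn one_ne_zero).differentiableAt (Ioi_mem_nhds hρ)).hasDerivAt
  have hL' : HasDerivAt (fun ρ => r ^ 2 * ρ - p ρ) (r ^ 2 - deriv p (q / s)) (q / s) :=
    (((hasDerivAt_id' (q / s)).const_mul (r ^ 2)).fun_sub hp').congr_deriv (by ring)
  beta_reduce
  rw [deriv_deriv_densityLagrangian_fst, deriv_deriv_densityLagrangian_fst_comp_const_div P hs.ne',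
    deriv_densityLagrangian_fst, deriv_deriv_comp_const_div hL hL' hs.ne',
    (hL.self_of_nhds.comp_const_div hs.ne').deriv, deriv_deriv_comp_div_mixed hL hL' hs.ne',
    hL.self_of_nhds.comp_div_const.deriv]
  field_simp
  ring
end

section
/- Let b : ℝ → ℝ be C² with b' > 0 on an interval J, and set g := √(b') on J, so g is C¹ and positive. Let u : ℝ × [0,∞) → J be C¹ and let γ : ℝ × [0,∞) → ℝ be C² with γ(x,0) = x, ∂ₓγ > 0, and ∂ₜγ(x,t) = u(γ(x,t), t) for all (x,t). Set u₀(x) := ∂ₜγ(x,0). If b'(∂ₜγ(x,t))·(∂ₓγ(x,t))² = b'(u₀(x)) for all (x,t), then at every point of the form (γ(x,t), t): ∂ₜ( g(u) ) + ∂ₓ( u · g(u) ) = 0. -/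
/-!
Along a particle path `s ↦ γ(x,s)` the geodesic equation says that `g(u) · γₓ` is constant,
equal to `√(b'(u₀ x))`. Differentiating in `s`, the material derivative `ρₜ + u ρₓ` of
`ρ = g(u)` appears from the first factor, while `∂ₜγₓ = ∂ₓγₜ = ∂ₓ(u ∘ γ) = uₓ γₓ` by the
symmetry of second derivatives and the flow equation. Hence `γₓ (ρₜ + u ρₓ + ρ uₓ) = 0`,
and `γₓ > 0`.
-/

open Set Function

variable {E : Type*} [NormedAddCommGroup E] [NormedSpace ℝ E]

theorem HasFDerivAt.hasDerivAt_partial_fst {f : ℝ × ℝ → E} {L : ℝ × ℝ →L[ℝ] E} {x t : ℝ}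
    (hf : HasFDerivAt f L (x, t)) : HasDerivAt (fun y => f (y, t)) (L (1, 0)) x :=
  hf.comp_hasDerivAt x ((hasDerivAt_id x).prodMk (hasDerivAt_const x t))

theorem HasFDerivAt.hasDerivAt_partial_snd {f : ℝ × ℝ → E} {L : ℝ × ℝ →L[ℝ] E} {x t : ℝ}
    (hf : HasFDerivAt f L (x, t)) : HasDerivAt (fun s => f (x, s)) (L (0, 1)) t :=
  hf.comp_hasDerivAt t ((hasDerivAt_const t x).prodMk (hasDerivAt_id t))

theorem HasFDerivAt.hasDerivAt_comp_graph {f : ℝ × ℝ → E} {L : ℝ × ℝ →L[ℝ] E} {a : ℝ → ℝ}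
    {v t : ℝ} (hf : HasFDerivAt f L (a t, t)) (ha : HasDerivAt a v t) :
    HasDerivAt (fun s => f (a s, s)) (v • L (1, 0) + L (0, 1)) t := by
  have hL : L (v, 1) = v • L (1, 0) + L (0, 1) := by
    rw [← map_smul, ← map_add]; simp
  rw [← hL]
  exact hf.comp_hasDerivAt (f := fun s => (a s, s)) t (ha.prodMk (hasDerivAt_id t))

theorem hasDerivAt_deriv_fst_of_hasDerivAt_deriv_snd {γ : ℝ → ℝ → E}
    (hγ : ContDiff ℝ 2 (uncurry γ)) {x t : ℝ} {m : E}
    (hm : HasDerivAt (fun y => deriv (γ y) t) m x) :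
    HasDerivAt (fun s => deriv (fun y => γ y s) x) m t := by
  have hD : ∀ p, HasFDerivAt (uncurry γ) (fderiv ℝ (uncurry γ) p) p :=
    fun p => ((hγ.differentiable two_ne_zero) p).hasFDerivAt
  have hD2 : HasFDerivAt (fderiv ℝ (uncurry γ)) (fderiv ℝ (fderiv ℝ (uncurry γ)) (x, t)) (x, t) :=
    ((hγ.fderiv_right (m := 1) le_rfl).differentiable one_ne_zero _).hasFDerivAt
  have hleft : (fun s => deriv (fun y => γ y s) x) = fun s => fderiv ℝ (uncurry γ) (x, s) (1, 0) :=
    funext fun s => (hD (x, s)).hasDerivAt_partial_fst.deriv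
  have hright : (fun y => deriv (γ y) t) = fun y => fderiv ℝ (uncurry γ) (y, t) (0, 1) :=
    funext fun y => (hD (y, t)).hasDerivAt_partial_snd.deriv
  rw [hright] at hm
  rw [hleft, hm.unique (hD2.hasDerivAt_partial_fst.clm_apply (hasDerivAt_const x _)),
    second_derivative_symmetric hD hD2]
  simpa using hD2.hasDerivAt_partial_snd.clm_apply (hasDerivAt_const t ((1 : ℝ), (0 : ℝ)))

theorem hasDerivAt_deriv_fst_of_flow {γ u : ℝ → ℝ → ℝ} (hγ : ContDiff ℝ 2 (uncurry γ))
    {x t uₓ : ℝ} (hflow : ∀ y, deriv (γ y) t = u (γ y t) t)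
    (hu : HasDerivAt (fun y => u y t) uₓ (γ x t)) :
    HasDerivAt (fun s => deriv (fun y => γ y s) x) (uₓ * deriv (fun y => γ y t) x) t := by
  refine hasDerivAt_deriv_fst_of_hasDerivAt_deriv_snd hγ ?_
  rw [funext hflow]
  exact hu.comp x ((hγ.differentiable two_ne_zero (x, t)).hasFDerivAt.hasDerivAt_partial_fst
    |>.differentiableAt.hasDerivAt)

theorem HasDerivAt.eq_zero_of_eqOn_Ici {F : ℝ → E} {F' c : E} {a t : ℝ}
    (hF : HasDerivAt F F' t) (ht : a ≤ t) (hc : EqOn F (fun _ => c) (Ici a)) : F' = 0 :=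
  (uniqueDiffOn_Ici a t ht).eq_deriv _ hF.hasDerivWithinAt
    ((hasDerivWithinAt_const t _ c).congr hc (hc ht))

theorem stmt19_general
    (b : ℝ → ℝ) (J : Set ℝ) (u γ : ℝ → ℝ → ℝ)
    (hb : ContDiff ℝ 2 b)
    (hb' : ∀ y ∈ J, 0 < deriv b y)
    (hu : ContDiff ℝ 1 (Function.uncurry u))
    (huJ : ∀ x t : ℝ, 0 ≤ t → u x t ∈ J)
    (hγ : ContDiff ℝ 2 (Function.uncurry γ))
    (hγx : ∀ x t : ℝ, 0 ≤ t → 0 < deriv (fun y => γ y t) x)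
    (hflow : ∀ x t : ℝ, 0 ≤ t → deriv (γ x) t = u (γ x t) t)
    (hgeo : ∀ x t : ℝ, 0 ≤ t →
      deriv b (deriv (γ x) t) * (deriv (fun y => γ y t) x) ^ 2
        = deriv b (deriv (γ x) 0)) :
    ∀ x t : ℝ, 0 ≤ t →
      deriv (fun s => Real.sqrt (deriv b (u (γ x t) s))) t
        + deriv (fun y => u y t * Real.sqrt (deriv b (u y t))) (γ x t) = 0 := by
  intro x t ht
  set ρ : ℝ × ℝ → ℝ := fun p => Real.sqrt (deriv b (uncurry u p))
  set X := γ x t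
  have hU : HasFDerivAt (uncurry u) (fderiv ℝ (uncurry u) (X, t)) (X, t) :=
    (hu.differentiable one_ne_zero _).hasFDerivAt
  have hρ : HasFDerivAt ρ (fderiv ℝ ρ (X, t)) (X, t) :=
    ((hb.differentiable_deriv_two _).comp _ hU.differentiableAt).sqrt
      (hb' _ (huJ X t ht)).ne' |>.hasFDerivAt
  have hγ_t : HasDerivAt (γ x) (u X t) t := by
    rw [← hflow x t ht]
    exact (hγ.differentiable two_ne_zero (x, t)).hasFDerivAt.hasDerivAt_partial_snd
      |>.differentiableAt.hasDerivAt
  have hγ_xt := hasDerivAt_deriv_fst_of_flow hγ (fun y => hflow y t ht) hU.hasDerivAt_partial_fst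
  have hconserved : EqOn (fun s => ρ (γ x s, s) * deriv (fun y => γ y s) x)
      (fun _ => Real.sqrt (deriv b (deriv (γ x) 0))) (Ici 0) := by
    intro s (hs : 0 ≤ s)
    rw [← hgeo x s hs, hflow x s hs, Real.sqrt_mul (hb' _ (huJ _ _ hs)).le,
      Real.sqrt_sq (hγx x s hs).le]
    rfl
  have hzero := ((hρ.hasDerivAt_comp_graph hγ_t).mul hγ_xt).eq_zero_of_eqOn_Ici ht hconserved
  have hρ_t : deriv (fun s => Real.sqrt (deriv b (u X s))) t = fderiv ℝ ρ (X, t) (0, 1) :=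
    hρ.hasDerivAt_partial_snd.deriv
  have hflux : deriv (fun y => u y t * Real.sqrt (deriv b (u y t))) X
      = fderiv ℝ (uncurry u) (X, t) (1, 0) * ρ (X, t) + u X t * fderiv ℝ ρ (X, t) (1, 0) :=
    (hU.hasDerivAt_partial_fst.mul hρ.hasDerivAt_partial_fst).deriv
  rw [hρ_t, hflux]
  refine (mul_eq_zero.mp ?_).resolve_right (hγx x t ht).ne'
  linear_combination hzero

/-- Let `g := √(b')` (positive and C¹ on the interval `J` where `b' > 0`).
If `γ` is the Lagrangian flow of `u` (`γ(x,0) = x`, `γ_x > 0`, `γ_t = u ∘ γ`) satisfying the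
integrated geodesic equation `b'(γ_t) γ_x² = b'(u₀)` with `u₀ = γ_t(·,0)`, then at every
point `(γ(x,t), t)` the conservation law `(g(u))_t + (u g(u))_x = 0` holds. -/
theorem stmt19
    (b : ℝ → ℝ) (J : Set ℝ) (u γ : ℝ → ℝ → ℝ)
    (hb : ContDiff ℝ 2 b)
    (hJ : J.OrdConnected)
    (hb' : ∀ y ∈ J, 0 < deriv b y)
    (hu : ContDiff ℝ 1 (Function.uncurry u))
    (huJ : ∀ x t : ℝ, 0 ≤ t → u x t ∈ J)
    (hγ : ContDiff ℝ 2 (Function.uncurry γ))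
    (hinit : ∀ x : ℝ, γ x 0 = x)
    (hγx : ∀ x t : ℝ, 0 ≤ t → 0 < deriv (fun y => γ y t) x)
    (hflow : ∀ x t : ℝ, 0 ≤ t → deriv (γ x) t = u (γ x t) t)
    (hgeo : ∀ x t : ℝ, 0 ≤ t →
      deriv b (deriv (γ x) t) * (deriv (fun y => γ y t) x) ^ 2
        = deriv b (deriv (γ x) 0)) :
    ∀ x t : ℝ, 0 ≤ t →
      deriv (fun s => Real.sqrt (deriv b (u (γ x t) s))) t
        + deriv (fun y => u y t * Real.sqrt (deriv b (u y t))) (γ x t) = 0 :=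
  stmt19_general b J u γ hb hb' hu huJ hγ hγx hflow hgeo
end
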